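/- arXiv:1310.3521 — 2 statements merged into one kernel-verified Lean document; each statement's English description precedes it below -/
import Mathlib

section
/- Under strict monotonicity of f_1 and f_2 (Axiom 1) and weak monotonicity of the middleman's net income function π in each argument (Axiom 2), the strategy profile with s_1 = s_2 = 1 and fees (ρ_1, ρ_2) = (f_1(1,1), f_2(1,1)) is a Nash equilibrium of the three-player game: no user can improve her payoff by changing her participation level, and the middleman cannot improve her payoff by changing the fee vector. -/
open Set

/-- User 1's payoff. -/
noncomputable def pay1 (f1 : ℝ → ℝ → ℝ) (ρ1 s1 s2 : ℝ) : ℝ :=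
  if ρ1 ≤ f1 s1 s2 then f1 s1 s2 - ρ1 else 0

/-- User 2's payoff. -/
noncomputable def pay2 (f2 : ℝ → ℝ → ℝ) (ρ2 s1 s2 : ℝ) : ℝ :=
  if ρ2 ≤ f2 s1 s2 then f2 s1 s2 - ρ2 else 0

/-- The middleman's payoff. -/
noncomputable def payM (π : ℝ → ℝ → ℝ → ℝ → ℝ) (f1 f2 : ℝ → ℝ → ℝ)
    (ρ1 ρ2 s1 s2 : ℝ) : ℝ :=
  if ρ1 ≤ f1 s1 s2 ∧ ρ2 ≤ f2 s1 s2 then π ρ1 ρ2 s1 s2 else 0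

/-!
At full extraction each user's surplus is zero. Lowering her own participation level only
lowers her value below the posted fee, so she is still left with zero. The middleman's fees
are accepted exactly when they do not exceed the users' values, and by monotonicity of `π`
the largest accepted fees are the best ones; a rejected fee vector yields `0 ≤ π`.
-/

theorem pay1_eq_zero_of_le {f1 : ℝ → ℝ → ℝ} {ρ1 s1 s2 : ℝ} (h : f1 s1 s2 ≤ ρ1) :
    pay1 f1 ρ1 s1 s2 = 0 := by
  unfold pay1
  split_ifs <;> linarith

theorem pay2_eq_zero_of_le {f2 : ℝ → ℝ → ℝ} {ρ2 s1 s2 : ℝ} (h : f2 s1 s2 ≤ ρ2) :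
    pay2 f2 ρ2 s1 s2 = 0 := by
  unfold pay2
  split_ifs <;> linarith

theorem payM_le_payM_full_extraction {π : ℝ → ℝ → ℝ → ℝ → ℝ} {f1 f2 : ℝ → ℝ → ℝ}
    {ρ1 ρ2 s1 s2 : ℝ} (hnonneg : 0 ≤ π (f1 s1 s2) (f2 s1 s2) s1 s2)
    (hmono : ρ1 ≤ f1 s1 s2 → ρ2 ≤ f2 s1 s2 →
      π ρ1 ρ2 s1 s2 ≤ π (f1 s1 s2) (f2 s1 s2) s1 s2) :
    payM π f1 f2 ρ1 ρ2 s1 s2 ≤ payM π f1 f2 (f1 s1 s2) (f2 s1 s2) s1 s2 := by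
  have hfull : payM π f1 f2 (f1 s1 s2) (f2 s1 s2) s1 s2 = π (f1 s1 s2) (f2 s1 s2) s1 s2 :=
    if_pos ⟨le_rfl, le_rfl⟩
  rw [hfull, payM]
  split_ifs with haccept
  · exact hmono haccept.1 haccept.2
  · exact hnonneg

theorem full_extraction_nash_equilibrium_general
    (f1 f2 : ℝ → ℝ → ℝ) (π : ℝ → ℝ → ℝ → ℝ → ℝ)
    (hf1nn : ∀ x ∈ Icc (0:ℝ) 1, ∀ y ∈ Icc (0:ℝ) 1, 0 ≤ f1 x y)
    (hf2nn : ∀ x ∈ Icc (0:ℝ) 1, ∀ y ∈ Icc (0:ℝ) 1, 0 ≤ f2 x y)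
    (hf1a : ∀ y ∈ Icc (0:ℝ) 1, StrictMonoOn (fun x => f1 x y) (Icc (0:ℝ) 1))
    (hf2b : ∀ x ∈ Icc (0:ℝ) 1, StrictMonoOn (fun y => f2 x y) (Icc (0:ℝ) 1))
    (hπnn : ∀ ρ1 ∈ Icc (0:ℝ) 1, ∀ ρ2 ∈ Icc (0:ℝ) 1, ∀ s1 ∈ Icc (0:ℝ) 1,
      ∀ s2 ∈ Icc (0:ℝ) 1, 0 ≤ π ρ1 ρ2 s1 s2)
    (hπ : ∀ ρ1 ∈ Icc (0:ℝ) 1, ∀ ρ2 ∈ Icc (0:ℝ) 1, ∀ s1 ∈ Icc (0:ℝ) 1,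
      ∀ s2 ∈ Icc (0:ℝ) 1, ∀ ρ1' ∈ Icc (0:ℝ) 1, ∀ ρ2' ∈ Icc (0:ℝ) 1,
      ∀ s1' ∈ Icc (0:ℝ) 1, ∀ s2' ∈ Icc (0:ℝ) 1,
      ρ1 ≤ ρ1' → ρ2 ≤ ρ2' → s1 ≤ s1' → s2 ≤ s2' →
        π ρ1 ρ2 s1 s2 ≤ π ρ1' ρ2' s1' s2')
    (hF1 : f1 1 1 ≤ 1) (hF2 : f2 1 1 ≤ 1) :
    (∀ s1' ∈ Icc (0:ℝ) 1,
        pay1 f1 (f1 1 1) s1' 1 ≤ pay1 f1 (f1 1 1) 1 1) ∧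
    (∀ s2' ∈ Icc (0:ℝ) 1,
        pay2 f2 (f2 1 1) 1 s2' ≤ pay2 f2 (f2 1 1) 1 1) ∧
    (∀ ρ1' ∈ Icc (0:ℝ) 1, ∀ ρ2' ∈ Icc (0:ℝ) 1,
        payM π f1 f2 ρ1' ρ2' 1 1 ≤ payM π f1 f2 (f1 1 1) (f2 1 1) 1 1) := by
  have h1 : (1:ℝ) ∈ Icc (0:ℝ) 1 := right_mem_Icc.2 zero_le_one
  have hf1m : f1 1 1 ∈ Icc (0:ℝ) 1 := ⟨hf1nn 1 h1 1 h1, hF1⟩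
  have hf2m : f2 1 1 ∈ Icc (0:ℝ) 1 := ⟨hf2nn 1 h1 1 h1, hF2⟩
  refine ⟨fun s1' hs1' => ?_, fun s2' hs2' => ?_, fun ρ1' hρ1' ρ2' hρ2' => ?_⟩
  · rw [pay1_eq_zero_of_le le_rfl,
      pay1_eq_zero_of_le ((hf1a 1 h1).monotoneOn hs1' h1 hs1'.2)]
  · rw [pay2_eq_zero_of_le le_rfl,
      pay2_eq_zero_of_le ((hf2b 1 h1).monotoneOn hs2' h1 hs2'.2)]
  · exact payM_le_payM_full_extraction (hπnn _ hf1m _ hf2m 1 h1 1 h1) fun hρ1 hρ2 =>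
      hπ ρ1' hρ1' ρ2' hρ2' 1 h1 1 h1 _ hf1m _ hf2m 1 h1 1 h1 hρ1 hρ2 le_rfl le_rfl

/-- Under Axiom 1 (strict monotonicity of `f1, f2` in each argument) and Axiom 2
(weak monotonicity of the middleman's net income `π` in each argument), the profile
`s1 = s2 = 1`, `(ρ1, ρ2) = (f1 1 1, f2 1 1)` is a Nash equilibrium: no user can
improve by changing her participation level and the middleman cannot improve by
changing the fee vector. -/
theorem full_extraction_nash_equilibrium
    (f1 f2 : ℝ → ℝ → ℝ) (π : ℝ → ℝ → ℝ → ℝ → ℝ)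
    (hf1nn : ∀ x ∈ Icc (0:ℝ) 1, ∀ y ∈ Icc (0:ℝ) 1, 0 ≤ f1 x y)
    (hf2nn : ∀ x ∈ Icc (0:ℝ) 1, ∀ y ∈ Icc (0:ℝ) 1, 0 ≤ f2 x y)
    (hf1a : ∀ y ∈ Icc (0:ℝ) 1, StrictMonoOn (fun x => f1 x y) (Icc (0:ℝ) 1))
    (hf1b : ∀ x ∈ Icc (0:ℝ) 1, StrictMonoOn (fun y => f1 x y) (Icc (0:ℝ) 1))
    (hf2a : ∀ y ∈ Icc (0:ℝ) 1, StrictMonoOn (fun x => f2 x y) (Icc (0:ℝ) 1))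
    (hf2b : ∀ x ∈ Icc (0:ℝ) 1, StrictMonoOn (fun y => f2 x y) (Icc (0:ℝ) 1))
    (hπnn : ∀ ρ1 ∈ Icc (0:ℝ) 1, ∀ ρ2 ∈ Icc (0:ℝ) 1, ∀ s1 ∈ Icc (0:ℝ) 1,
      ∀ s2 ∈ Icc (0:ℝ) 1, 0 ≤ π ρ1 ρ2 s1 s2)
    (hπ : ∀ ρ1 ∈ Icc (0:ℝ) 1, ∀ ρ2 ∈ Icc (0:ℝ) 1, ∀ s1 ∈ Icc (0:ℝ) 1,
      ∀ s2 ∈ Icc (0:ℝ) 1, ∀ ρ1' ∈ Icc (0:ℝ) 1, ∀ ρ2' ∈ Icc (0:ℝ) 1,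
      ∀ s1' ∈ Icc (0:ℝ) 1, ∀ s2' ∈ Icc (0:ℝ) 1,
      ρ1 ≤ ρ1' → ρ2 ≤ ρ2' → s1 ≤ s1' → s2 ≤ s2' →
        π ρ1 ρ2 s1 s2 ≤ π ρ1' ρ2' s1' s2')
    (hF1 : f1 1 1 ≤ 1) (hF2 : f2 1 1 ≤ 1) :
    (∀ s1' ∈ Icc (0:ℝ) 1,
        pay1 f1 (f1 1 1) s1' 1 ≤ pay1 f1 (f1 1 1) 1 1) ∧
    (∀ s2' ∈ Icc (0:ℝ) 1,
        pay2 f2 (f2 1 1) 1 s2' ≤ pay2 f2 (f2 1 1) 1 1) ∧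
    (∀ ρ1' ∈ Icc (0:ℝ) 1, ∀ ρ2' ∈ Icc (0:ℝ) 1,
        payM π f1 f2 ρ1' ρ2' 1 1 ≤ payM π f1 f2 (f1 1 1) (f2 1 1) 1 1) :=
  full_extraction_nash_equilibrium_general f1 f2 π hf1nn hf2nn hf1a hf2b hπnn hπ hF1 hF2
end

section
/- Assume π : [0,1]² × [0,1]² → ℝ≥0 is weakly increasing in each argument, f_1, f_2 strictly increasing in each argument, and s*_1, s*_2 < 1. Let F = (f_1(1,1), f_2(1,1)) and φ = (f_1(s*_1,s*_2), f_2(s*_1,s*_2)). Then over all fee vectors ρ with ρ_i ≤ f_i(1,1) for both i, the ambiguity-modified payoff π̄_M(ρ,1,1) is maximized either at ρ = F or at ρ = φ; i.e. max over ρ of π̄_M(ρ,1,1) = max{π̄_M(F,1,1), π̄_M(φ,1,1)}. -/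
/-!
Since `M = π_M`, the payoff is `(1 - γ)·M(ρ) + γ·m(ρ)` with nonnegative weights. If `ρ ≤ φ`,
monotonicity of `π` bounds `M(ρ)` and `m(ρ)` by their values at `φ ≤ F`. Otherwise
`m(ρ) = 0 ≤ m(F)` and `M(ρ) ≤ M(F)`.
-/

open Set

/-- The middleman's ambiguity-modified payoff at usage levels `s1 = s2 = 1`:
`λ·M(ρ) + γ·m(ρ) + (1-λ-γ)·π_M(ρ,1,1)`, with optimistic payoff
`M(ρ) = π(ρ,1,1)·1[ρ ≤ F]`, pessimistic payoff `m(ρ) = π(ρ,s1*,s2*)·1[ρ ≤ φ]`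
and `π_M(ρ,1,1) = π(ρ,1,1)·1[ρ ≤ F]` (inequalities componentwise). -/
noncomputable def barPiM (π : ℝ → ℝ → ℝ → ℝ → ℝ) (f1 f2 : ℝ → ℝ → ℝ)
    (lam γ s1s s2s ρ1 ρ2 : ℝ) : ℝ :=
  lam * (if ρ1 ≤ f1 1 1 ∧ ρ2 ≤ f2 1 1 then π ρ1 ρ2 1 1 else 0)
    + γ * (if ρ1 ≤ f1 s1s s2s ∧ ρ2 ≤ f2 s1s s2s then π ρ1 ρ2 s1s s2s else 0)
    + (1 - lam - γ) * (if ρ1 ≤ f1 1 1 ∧ ρ2 ≤ f2 1 1 then π ρ1 ρ2 1 1 else 0)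

/-- The paper's `M` for `b = F`, `t = (1,1)`, and its `m` for `b = φ`, `t = s*`. -/
noncomputable def truncPayoff (π : ℝ → ℝ → ℝ → ℝ → ℝ) (b1 b2 t1 t2 ρ1 ρ2 : ℝ) : ℝ :=
  if ρ1 ≤ b1 ∧ ρ2 ≤ b2 then π ρ1 ρ2 t1 t2 else 0

section truncPayoff

variable {π : ℝ → ℝ → ℝ → ℝ → ℝ} {a1 a2 b1 b2 t1 t2 ρ1 ρ2 : ℝ}

theorem truncPayoff_of_le (h1 : ρ1 ≤ b1) (h2 : ρ2 ≤ b2) :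
    truncPayoff π b1 b2 t1 t2 ρ1 ρ2 = π ρ1 ρ2 t1 t2 :=
  if_pos ⟨h1, h2⟩

theorem truncPayoff_of_not_le (h : ¬(ρ1 ≤ b1 ∧ ρ2 ≤ b2)) :
    truncPayoff π b1 b2 t1 t2 ρ1 ρ2 = 0 :=
  if_neg h

theorem truncPayoff_nonneg
    (hπnn : ∀ ρ1 ∈ Icc (0:ℝ) 1, ∀ ρ2 ∈ Icc (0:ℝ) 1, ∀ s1 ∈ Icc (0:ℝ) 1,
      ∀ s2 ∈ Icc (0:ℝ) 1, 0 ≤ π ρ1 ρ2 s1 s2)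
    (hρ1 : ρ1 ∈ Icc (0:ℝ) 1) (hρ2 : ρ2 ∈ Icc (0:ℝ) 1)
    (ht1 : t1 ∈ Icc (0:ℝ) 1) (ht2 : t2 ∈ Icc (0:ℝ) 1) :
    0 ≤ truncPayoff π b1 b2 t1 t2 ρ1 ρ2 := by
  unfold truncPayoff
  split_ifs
  · exact hπnn _ hρ1 _ hρ2 _ ht1 _ ht2
  · exact le_rfl

theorem truncPayoff_le_of_le
    (hπnn : ∀ ρ1 ∈ Icc (0:ℝ) 1, ∀ ρ2 ∈ Icc (0:ℝ) 1, ∀ s1 ∈ Icc (0:ℝ) 1,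
      ∀ s2 ∈ Icc (0:ℝ) 1, 0 ≤ π ρ1 ρ2 s1 s2)
    (hπ : ∀ ρ1 ∈ Icc (0:ℝ) 1, ∀ ρ2 ∈ Icc (0:ℝ) 1, ∀ s1 ∈ Icc (0:ℝ) 1,
      ∀ s2 ∈ Icc (0:ℝ) 1, ∀ ρ1' ∈ Icc (0:ℝ) 1, ∀ ρ2' ∈ Icc (0:ℝ) 1,
      ∀ s1' ∈ Icc (0:ℝ) 1, ∀ s2' ∈ Icc (0:ℝ) 1,
      ρ1 ≤ ρ1' → ρ2 ≤ ρ2' → s1 ≤ s1' → s2 ≤ s2' →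
        π ρ1 ρ2 s1 s2 ≤ π ρ1' ρ2' s1' s2')
    (hρ1 : ρ1 ∈ Icc (0:ℝ) 1) (hρ2 : ρ2 ∈ Icc (0:ℝ) 1)
    (ha1 : a1 ∈ Icc (0:ℝ) 1) (ha2 : a2 ∈ Icc (0:ℝ) 1)
    (ht1 : t1 ∈ Icc (0:ℝ) 1) (ht2 : t2 ∈ Icc (0:ℝ) 1)
    (h1 : ρ1 ≤ a1) (h2 : ρ2 ≤ a2) :
    truncPayoff π b1 b2 t1 t2 ρ1 ρ2 ≤ π a1 a2 t1 t2 := by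
  unfold truncPayoff
  split_ifs
  · exact hπ _ hρ1 _ hρ2 _ ht1 _ ht2 _ ha1 _ ha2 _ ht1 _ ht2 h1 h2 le_rfl le_rfl
  · exact hπnn _ ha1 _ ha2 _ ht1 _ ht2

end truncPayoff

theorem barPiM_eq (π : ℝ → ℝ → ℝ → ℝ → ℝ) (f1 f2 : ℝ → ℝ → ℝ) (lam γ s1s s2s ρ1 ρ2 : ℝ) :
    barPiM π f1 f2 lam γ s1s s2s ρ1 ρ2 =
      (1 - γ) * truncPayoff π (f1 1 1) (f2 1 1) 1 1 ρ1 ρ2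
        + γ * truncPayoff π (f1 s1s s2s) (f2 s1s s2s) s1s s2s ρ1 ρ2 := by
  unfold barPiM truncPayoff
  ring

theorem le_apply_one_one_of_monotoneOn {f : ℝ → ℝ → ℝ}
    (hfx : ∀ y ∈ Icc (0:ℝ) 1, MonotoneOn (fun x => f x y) (Icc (0:ℝ) 1))
    (hfy : ∀ x ∈ Icc (0:ℝ) 1, MonotoneOn (fun y => f x y) (Icc (0:ℝ) 1))
    {x y : ℝ} (hx : x ∈ Icc (0:ℝ) 1) (hy : y ∈ Icc (0:ℝ) 1) :
    f x y ≤ f 1 1 :=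
  have h1 : (1:ℝ) ∈ Icc (0:ℝ) 1 := right_mem_Icc.2 zero_le_one
  (hfy x hx hy h1 hy.2).trans (hfx 1 h1 hx h1 hx.2)

/-- Over all fee vectors `ρ` with `0 ≤ ρ_i ≤ f_i(1,1)`, the ambiguity-modified
payoff `π̄_M(ρ,1,1)` attains its maximum either at `ρ = F = (f1 1 1, f2 1 1)`
or at `ρ = φ = (f1 s1* s2*, f2 s1* s2*)`:
`max_ρ π̄_M(ρ,1,1) = max {π̄_M(F,1,1), π̄_M(φ,1,1)}`. -/
theorem barPiM_max_at_F_or_phi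
    (π : ℝ → ℝ → ℝ → ℝ → ℝ) (f1 f2 : ℝ → ℝ → ℝ)
    (lam γ s1s s2s : ℝ)
    (hs1 : s1s ∈ Ico (0:ℝ) 1) (hs2 : s2s ∈ Ico (0:ℝ) 1)
    (hlam : 0 ≤ lam) (hγ0 : 0 ≤ γ) (hprop : lam + γ ≤ 1)
    (hf1nn : ∀ x ∈ Icc (0:ℝ) 1, ∀ y ∈ Icc (0:ℝ) 1, 0 ≤ f1 x y)
    (hf2nn : ∀ x ∈ Icc (0:ℝ) 1, ∀ y ∈ Icc (0:ℝ) 1, 0 ≤ f2 x y)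
    (hf1a : ∀ y ∈ Icc (0:ℝ) 1, StrictMonoOn (fun x => f1 x y) (Icc (0:ℝ) 1))
    (hf1b : ∀ x ∈ Icc (0:ℝ) 1, StrictMonoOn (fun y => f1 x y) (Icc (0:ℝ) 1))
    (hf2a : ∀ y ∈ Icc (0:ℝ) 1, StrictMonoOn (fun x => f2 x y) (Icc (0:ℝ) 1))
    (hf2b : ∀ x ∈ Icc (0:ℝ) 1, StrictMonoOn (fun y => f2 x y) (Icc (0:ℝ) 1))
    (hF1 : f1 1 1 ≤ 1) (hF2 : f2 1 1 ≤ 1)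
    (hπnn : ∀ ρ1 ∈ Icc (0:ℝ) 1, ∀ ρ2 ∈ Icc (0:ℝ) 1, ∀ s1 ∈ Icc (0:ℝ) 1,
      ∀ s2 ∈ Icc (0:ℝ) 1, 0 ≤ π ρ1 ρ2 s1 s2)
    (hπ : ∀ ρ1 ∈ Icc (0:ℝ) 1, ∀ ρ2 ∈ Icc (0:ℝ) 1, ∀ s1 ∈ Icc (0:ℝ) 1,
      ∀ s2 ∈ Icc (0:ℝ) 1, ∀ ρ1' ∈ Icc (0:ℝ) 1, ∀ ρ2' ∈ Icc (0:ℝ) 1,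
      ∀ s1' ∈ Icc (0:ℝ) 1, ∀ s2' ∈ Icc (0:ℝ) 1,
      ρ1 ≤ ρ1' → ρ2 ≤ ρ2' → s1 ≤ s1' → s2 ≤ s2' →
        π ρ1 ρ2 s1 s2 ≤ π ρ1' ρ2' s1' s2') :
    IsGreatest
      {v : ℝ | ∃ ρ1 ρ2 : ℝ, 0 ≤ ρ1 ∧ 0 ≤ ρ2 ∧ ρ1 ≤ f1 1 1 ∧ ρ2 ≤ f2 1 1 ∧
        v = barPiM π f1 f2 lam γ s1s s2s ρ1 ρ2}
      (max (barPiM π f1 f2 lam γ s1s s2s (f1 1 1) (f2 1 1))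
        (barPiM π f1 f2 lam γ s1s s2s (f1 s1s s2s) (f2 s1s s2s))) := by
  have h1 : (1:ℝ) ∈ Icc (0:ℝ) 1 := right_mem_Icc.2 zero_le_one
  have hs1' : s1s ∈ Icc (0:ℝ) 1 := Ico_subset_Icc_self hs1
  have hs2' : s2s ∈ Icc (0:ℝ) 1 := Ico_subset_Icc_self hs2
  have hφF1 : f1 s1s s2s ≤ f1 1 1 := le_apply_one_one_of_monotoneOn
    (fun y hy => (hf1a y hy).monotoneOn) (fun x hx => (hf1b x hx).monotoneOn) hs1' hs2'
  have hφF2 : f2 s1s s2s ≤ f2 1 1 := le_apply_one_one_of_monotoneOn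
    (fun y hy => (hf2a y hy).monotoneOn) (fun x hx => (hf2b x hx).monotoneOn) hs1' hs2'
  have hF1' : f1 1 1 ∈ Icc (0:ℝ) 1 := ⟨hf1nn 1 h1 1 h1, hF1⟩
  have hF2' : f2 1 1 ∈ Icc (0:ℝ) 1 := ⟨hf2nn 1 h1 1 h1, hF2⟩
  have hφ1 : f1 s1s s2s ∈ Icc (0:ℝ) 1 := ⟨hf1nn _ hs1' _ hs2', hφF1.trans hF1⟩
  have hφ2 : f2 s1s s2s ∈ Icc (0:ℝ) 1 := ⟨hf2nn _ hs1' _ hs2', hφF2.trans hF2⟩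
  have hγ1 : 0 ≤ 1 - γ := by linarith
  refine ⟨?_, ?_⟩
  · rcases max_choice (barPiM π f1 f2 lam γ s1s s2s (f1 1 1) (f2 1 1))
      (barPiM π f1 f2 lam γ s1s s2s (f1 s1s s2s) (f2 s1s s2s)) with h | h <;> rw [h]
    · exact ⟨_, _, hF1'.1, hF2'.1, le_rfl, le_rfl, rfl⟩
    · exact ⟨_, _, hφ1.1, hφ2.1, hφF1, hφF2, rfl⟩
  rintro v ⟨ρ1, ρ2, hρ1, hρ2, hρF1, hρF2, rfl⟩
  replace hρ1 : ρ1 ∈ Icc (0:ℝ) 1 := ⟨hρ1, hρF1.trans hF1⟩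
  replace hρ2 : ρ2 ∈ Icc (0:ℝ) 1 := ⟨hρ2, hρF2.trans hF2⟩
  simp only [barPiM_eq]
  by_cases hρφ : ρ1 ≤ f1 s1s s2s ∧ ρ2 ≤ f2 s1s s2s
  · refine le_max_of_le_right ?_
    rw [truncPayoff_of_le hφF1 hφF2, truncPayoff_of_le le_rfl le_rfl]
    gcongr
    · exact truncPayoff_le_of_le hπnn hπ hρ1 hρ2 hφ1 hφ2 h1 h1 hρφ.1 hρφ.2
    · exact truncPayoff_le_of_le hπnn hπ hρ1 hρ2 hφ1 hφ2 hs1' hs2' hρφ.1 hρφ.2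
  · refine le_max_of_le_left ?_
    rw [truncPayoff_of_not_le hρφ, truncPayoff_of_le le_rfl le_rfl]
    gcongr
    · exact truncPayoff_le_of_le hπnn hπ hρ1 hρ2 hF1' hF2' h1 h1 hρF1 hρF2
    · exact truncPayoff_nonneg hπnn hF1' hF2' hs1' hs2'
end
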